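/- arXiv:2504.19383 — 2 statements merged into one kernel-verified Lean document; each statement's English description precedes it below -/
import Mathlib

section
/- Let $d(s)$ be the monic greatest common divisor of the family of polynomials $p(s+i+1)\cdot\prod_{j=0}^{i} b(s+j)$ for $i \in \mathbb{Z}_{\geq 0}$, where $p, b \in \mathbb{C}[s]$ and $b$ is monic. Then $d(s) = b(s) \cdot c_{p,b}(s+1)$, where $c_{p,b}(s) = \gcd_{i\geq 0}\big(p(s+i)\prod_{j=0}^{i-1} b(s+j)\big)$. -/
open Polynomial

/-- The family `p(s+i) * ∏_{j=0}^{i-1} b(s+j)`. -/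
noncomputable def gcdFamily (p b : Polynomial ℂ) (i : ℕ) : Polynomial ℂ :=
  p.comp (X + C (i : ℂ)) * ∏ j ∈ Finset.range i, b.comp (X + C (j : ℂ))

/-- The family `p(s+i+1) * ∏_{j=0}^{i} b(s+j)`. -/
noncomputable def gcdFamily' (p b : Polynomial ℂ) (i : ℕ) : Polynomial ℂ :=
  p.comp (X + C ((i : ℂ) + 1)) * ∏ j ∈ Finset.range (i + 1), b.comp (X + C (j : ℂ))

private lemma dvd_comp_aux {a b q : Polynomial ℂ} (h : a ∣ b) : a.comp q ∣ b.comp q := by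
  obtain ⟨k, rfl⟩ := h
  exact ⟨k.comp q, mul_comp a k q⟩

private lemma comp_shift_shift (f : Polynomial ℂ) (u v : ℂ) :
    (f.comp (X + C u)).comp (X + C v) = f.comp (X + C (u + v)) := by
  rw [comp_assoc]
  congr 1
  rw [add_comp, X_comp, C_comp, add_assoc, ← C_add, add_comm v u]

private lemma key_eq (p b : Polynomial ℂ) (i : ℕ) :
    gcdFamily' p b i = b * (gcdFamily p b i).comp (X + C 1) := by
  unfold gcdFamily gcdFamily'
  rw [mul_comp, prod_comp]
  simp only [comp_shift_shift]
  rw [Finset.prod_range_succ']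
  push_cast
  simp only [C_0, add_zero, comp_X, add_comm (1:ℂ)]
  ring

/-- the monic gcd `d(s)` of the family `p(s+i+1) ∏_{j=0}^{i} b(s+j)` equals
`b(s) · c_{p,b}(s+1)`, where `c_{p,b}(s)` is the monic gcd of the family
`p(s+i) ∏_{j=0}^{i-1} b(s+j)`. -/
theorem stmt2 (p b c e : Polynomial ℂ) (hb : b.Monic)
    (hc : c.Monic)
    (hcdvd : ∀ i : ℕ, c ∣ gcdFamily p b i)
    (hcgcd : ∀ g : Polynomial ℂ, (∀ i : ℕ, g ∣ gcdFamily p b i) → g ∣ c)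
    (he : e.Monic)
    (hedvd : ∀ i : ℕ, e ∣ gcdFamily' p b i)
    (hegcd : ∀ g : Polynomial ℂ, (∀ i : ℕ, g ∣ gcdFamily' p b i) → g ∣ e) :
    e = b * c.comp (X + C 1) := by
  set Cc := c.comp (X + C 1) with hCc
  have hCcM : Cc.Monic := hc.comp_X_add_C 1
  have hbC : (b * Cc).Monic := hb.mul hCcM
  -- universal property for the shifted family
  have CC : ∀ g : Polynomial ℂ,
      (∀ i : ℕ, g ∣ (gcdFamily p b i).comp (X + C 1)) → g ∣ Cc := by
    intro g hg
    have h1 : g.comp (X + C (-1)) ∣ c := by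
      apply hcgcd
      intro i
      have := dvd_comp_aux (q := X + C (-1)) (hg i)
      rwa [comp_shift_shift, add_neg_cancel, C_0, add_zero, comp_X] at this
    have h2 := dvd_comp_aux (q := X + C 1) h1
    rwa [comp_shift_shift, neg_add_cancel, C_0, add_zero, comp_X] at h2
  have hb0 : b ≠ 0 := hb.ne_zero
  apply Polynomial.eq_of_monic_of_associated he hbC
  apply associated_of_dvd_dvd
  · -- e ∣ b * Cc
    set h := GCDMonoid.gcd e b with hh
    have h0 : h ≠ 0 := fun hz => hb0 ((gcd_eq_zero_iff e b).mp hz).2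
    have heq : h * (e / h) = e := EuclideanDomain.mul_div_cancel' h0 (gcd_dvd_left e b)
    have hbq : h * (b / h) = b := EuclideanDomain.mul_div_cancel' h0 (gcd_dvd_right e b)
    have hcop : IsCoprime (e / h) (b / h) := isCoprime_div_gcd_div_gcd hb0
    have hdvdC : (e / h) ∣ Cc := by
      apply CC
      intro i
      have h1 : e ∣ b * (gcdFamily p b i).comp (X + C 1) := by
        rw [← key_eq]; exact hedvd i
      have h2 : h * (e / h) ∣ h * ((b / h) * (gcdFamily p b i).comp (X + C 1)) := by
        rw [heq, ← mul_assoc, hbq]; exact h1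
      have h3 : (e / h) ∣ (b / h) * (gcdFamily p b i).comp (X + C 1) :=
        (mul_dvd_mul_iff_left h0).mp h2
      exact hcop.dvd_of_dvd_mul_left h3
    calc e = h * (e / h) := heq.symm
      _ ∣ b * Cc := mul_dvd_mul (gcd_dvd_right e b) hdvdC
  · -- b * Cc ∣ e
    apply hegcd
    intro i
    rw [key_eq]
    exact mul_dvd_mul_left b (dvd_comp_aux (hcdvd i))
end

section
/- Let $b(s) = \prod_{i=1}^d (s + r_i)$ with $r_i \in \mathbb{Q}$, let $p(s) \in \mathbb{C}[s]$ be nonzero, and let $(k_1,\dots,k_d) \in \mathbb{Z}_{\geq 0}^d$ be a maximal tuple such that $\prod_{i=1}^d [s+r_i]_{k_i}$ divides $p(s)$ (with $[s+r]_k = \prod_{j=0}^{k-1}(s+r+j)$, $[s+r]_0 = 1$). Then $\deg\Big( b(s)\cdot \frac{c_{p,b}(s+1)}{c_{p,b}(s)} \Big) = \deg b(s) = d$, where $c_{p,b}(s) = \gcd_{i\geq 0}\big(p(s+i)\prod_{j=0}^{i-1}b(s+j)\big)$. -/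
open Polynomial

/-- `[s+r]_k = ∏_{j=0}^{k-1} (s+r+j)`, with `[s+r]_0 = 1`. -/
noncomputable def fallingProd (r : ℂ) (k : ℕ) : Polynomial ℂ :=
  ∏ j ∈ Finset.range k, (X + C (r + (j : ℂ)))

lemma gcdFamily_succ (p b : Polynomial ℂ) (i : ℕ) :
    gcdFamily p b (i + 1) = b * (gcdFamily p b i).comp (X + C 1) := by
  simp only [gcdFamily, mul_comp, prod_comp, comp_assoc, add_comp, X_comp, C_comp,
    Finset.prod_range_succ', add_assoc, ← C_add, C_0, add_zero, comp_X]
  push_cast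
  simp [add_comm, mul_comm, mul_left_comm]

/-- `deg(b(s) · c_{p,b}(s+1)/c_{p,b}(s)) = deg b = d`:
any polynomial `Q` with `b(s)·c_{p,b}(s+1) = c_{p,b}(s)·Q(s)` exists and has degree `d`. -/
theorem stmt14 (d : ℕ) (r : Fin d → ℚ) (b p : Polynomial ℂ)
    (hb : b = ∏ i, (X + C ((r i : ℚ) : ℂ)))
    (hp : p ≠ 0)
    (k : Fin d → ℕ)
    (hdvdk : (∏ i, fallingProd ((r i : ℚ) : ℂ) (k i)) ∣ p)
    (hmax : ∀ i : Fin d,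
      ¬ ((X + C (((r i : ℚ) : ℂ) + (k i : ℂ))) * ∏ j, fallingProd ((r j : ℚ) : ℂ) (k j)) ∣ p)
    (c : Polynomial ℂ) (hc : c.Monic)
    (hdvd : ∀ i : ℕ, c ∣ gcdFamily p b i)
    (hgcd : ∀ e : Polynomial ℂ, (∀ i : ℕ, e ∣ gcdFamily p b i) → e ∣ c) :
    (∃ Q : Polynomial ℂ, b * c.comp (X + C 1) = c * Q) ∧
      (∀ Q : Polynomial ℂ, b * c.comp (X + C 1) = c * Q → Q.natDegree = d) ∧
      b.natDegree = d := by
  have hbm : b.Monic := by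
    rw [hb]; exact monic_prod_of_monic _ _ fun i _ => monic_X_add_C _
  have hbdeg : b.natDegree = d := by
    rw [hb, natDegree_prod _ _ fun i _ => X_add_C_ne_zero _]
    simp
  -- c belongs to the ideal generated by the family
  have hcI : c ∈ Ideal.span (Set.range (gcdFamily p b)) := by
    obtain ⟨g, hg⟩ := IsPrincipalIdealRing.principal
      (Ideal.span (Set.range (gcdFamily p b)))
    have hgdvd : g ∣ c := by
      refine hgcd g fun i => ?_
      have : gcdFamily p b i ∈ Ideal.span (Set.range (gcdFamily p b)) :=
        Ideal.subset_span ⟨i, rfl⟩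
      rw [hg] at this
      exact Ideal.mem_span_singleton.mp this
    rw [hg]
    exact Ideal.mem_span_singleton.mpr hgdvd
  -- key divisibility: c ∣ b · c(s+1)
  have key : c ∣ b * c.comp (X + C 1) := by
    rw [← Ideal.mem_span_singleton]
    refine Submodule.span_induction (R := Polynomial ℂ) (M := Polynomial ℂ)
      (p := fun x _ => b * x.comp (X + C 1) ∈ Ideal.span {c}) ?_ ?_ ?_ ?_ hcI
    · rintro x ⟨i, rfl⟩
      rw [← gcdFamily_succ]
      exact Ideal.mem_span_singleton.mpr (hdvd (i + 1))
    · simp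
    · intro x y _ _ hx hy
      rw [add_comp, mul_add]
      exact Ideal.add_mem _ hx hy
    · intro a x _ hx
      rw [smul_eq_mul, mul_comp, mul_left_comm]
      exact Ideal.mul_mem_left _ _ hx
  obtain ⟨Q0, hQ0⟩ := key
  refine ⟨⟨Q0, hQ0⟩, ?_, hbdeg⟩
  intro Q hQ
  have hcc : (c.comp (X + C 1)).Monic := hc.comp_X_add_C 1
  have hne : b * c.comp (X + C 1) ≠ 0 := (hbm.mul hcc).ne_zero
  have hQne : Q ≠ 0 := by
    rintro rfl
    rw [mul_zero] at hQ
    exact hne hQ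
  have h1 : (b * c.comp (X + C 1)).natDegree = d + c.natDegree := by
    rw [natDegree_mul hbm.ne_zero hcc.ne_zero, hbdeg, natDegree_comp,
      natDegree_X_add_C, mul_one]
  have h2 : (c * Q).natDegree = c.natDegree + Q.natDegree :=
    natDegree_mul hc.ne_zero hQne
  rw [hQ, h2] at h1
  omega
end
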